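/- arXiv:2111.12850 — 2 statements merged into one kernel-verified Lean document; each statement's English description precedes it below -/
import Mathlib

section
/- The function g is injective on the set A of tuples α ∈ {1,...,n}^n satisfying α_1 = α_2, α_{i+1} ∈ {α_i − 1, α_i} for all i, and α_n = 2: distinct tuples in A have distinct values of g. -/
/-- The first spot in the list `l` not in `occ`, if any. -/
def firstFree (occ : Finset ℕ) (l : List ℕ) : Option ℕ :=
  l.find? (fun s => decide (s ∉ occ))

/-- Run a parking simulation: each car is a pair (preference, coin); `step`
decides where a car parks (or `none` if it fails). Returns `true` iff all cars park. -/
def runPark (step : Finset ℕ → ℕ → Bool → Option ℕ) :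
    List (ℕ × Bool) → Finset ℕ → Bool
  | [], _ => true
  | (a, b) :: rest, occ =>
    match step occ a b with
    | none => false
    | some s => runPark step rest (insert s occ)

/-- Run a parking simulation, returning the final set of occupied spots
(cars that fail to park simply do not park). -/
def runOcc (step : Finset ℕ → ℕ → Bool → Option ℕ) :
    List (ℕ × Bool) → Finset ℕ → Finset ℕ
  | [], occ => occ
  | (a, b) :: rest, occ =>
    match step occ a b with
    | none => runOcc step rest occ
    | some s => runOcc step rest (insert s occ)

/-- Random-direction step on spots `1,…,n`: if the preferred spot `a` is free, take it;
otherwise if the coin says forward, take the first free spot among `a+1,…,n`;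
otherwise take the first free spot among `a-1,…,1`. -/
def dirStep (n : ℕ) (occ : Finset ℕ) (a : ℕ) (fwd : Bool) : Option ℕ :=
  if a ∉ occ then some a
  else if fwd then firstFree occ (List.range' (a + 1) (n - a))
  else firstFree occ ((List.range' 1 (a - 1)).reverse)

/-- Random `k`-Naples step on spots `1,…,n`: if the preferred spot `a` is free, take it;
otherwise, if the coin says to back up, check spots `a-1, a-2, …, max(a-k,1)` one by one
taking the first free one; if none (or if the coin says not to back up), take the first
free spot among `a+1,…,n`. -/
def naplesStep (n k : ℕ) (occ : Finset ℕ) (a : ℕ) (back : Bool) : Option ℕ :=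
  if a ∉ occ then some a
  else
    let fwd := firstFree occ (List.range' (a + 1) (n - a))
    if back then
      match firstFree occ ((List.range' (max (a - k) 1) (min k (a - 1))).reverse) with
      | some s => some s
      | none => fwd
    else fwd

/-- Circular random-direction step on spots `1,…,n+1` arranged in a circle:
if the preferred spot `a` is free, take it; otherwise search clockwise
(`a+1, a+2, …` wrapping around) or counterclockwise according to the coin. -/
def circStep (n : ℕ) (occ : Finset ℕ) (a : ℕ) (cw : Bool) : Option ℕ :=
  if a ∉ occ then some a
  else if cw then
    firstFree occ (List.range' (a + 1) (n + 1 - a) ++ List.range' 1 (a - 1))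
  else
    firstFree occ ((List.range' 1 (a - 1)).reverse ++ (List.range' (a + 1) (n + 1 - a)).reverse)

/-- Whether all `n` cars with preferences `α` park in the random-direction model on spots
`1,…,n` with coins `b` (`b i = true` means car `i` searches forward when its spot is taken). -/
def parksDir (n : ℕ) (α : Fin n → ℕ) (b : Fin n → Bool) : Bool :=
  runPark (dirStep n) (List.ofFn (fun i => (α i, b i))) ∅

/-- Whether all `n` cars with preferences `α` park in the `k`-Naples model on spots `1,…,n`
with coins `b` (`b i = true` means car `i` backs up when its spot is taken). -/
def parksNaples (n k : ℕ) (α : Fin n → ℕ) (b : Fin n → Bool) : Bool :=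
  runPark (naplesStep n k) (List.ofFn (fun i => (α i, b i))) ∅

/-- The probability that all cars park in the random-direction model, where each car
whose spot is taken independently searches forward with probability `p` and backward
with probability `1 - p`. -/
noncomputable def probDir (n : ℕ) (p : ℝ) (α : Fin n → ℕ) : ℝ :=
  ∑ b : Fin n → Bool,
    (∏ i, if b i then p else 1 - p) * (if parksDir n α b then 1 else 0)

/-- The probability that all cars park in the random `k`-Naples model, where each car
whose spot is taken independently backs up (up to) `k` spots with probability `p`. -/
noncomputable def probNaples (n k : ℕ) (p : ℝ) (α : Fin n → ℕ) : ℝ :=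
  ∑ b : Fin n → Bool,
    (∏ i, if b i then p else 1 - p) * (if parksNaples n k α b then 1 else 0)

/-- The deterministic 1-Naples simulation for choices `β = (β₂,…,βₙ) ∈ {0,1}^{n-1}`:
car `i ≥ 2` backs up one spot first iff `β i = false` (i.e. `βᵢ = 0`); car 1's choice
is irrelevant since its preferred spot is always free. -/
def parksUnder (n : ℕ) (α : Fin n → ℕ) (β : Fin (n - 1) → Bool) : Bool :=
  parksNaples n 1 α
    (fun i => if h : 0 < i.1 then !(β ⟨i.1 - 1, by have := i.2; omega⟩) else false)

/-- `g α`: the number of choice sequences `β ∈ {0,1}^{n-1}` under which `α` parks in the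
deterministic 1-Naples simulation. -/
def g (n : ℕ) (α : Fin n → ℕ) : ℕ :=
  (Finset.univ.filter (fun β : Fin (n - 1) → Bool => parksUnder n α β = true)).card

/-- `α` is a parking function: every car parks when each car whose preferred spot is taken
only searches forward. -/
def forwardParks (n : ℕ) (α : Fin n → ℕ) : Bool :=
  parksNaples n 0 α (fun _ => false)

/-- `α` is a 1-Naples parking function: every car parks when each car whose preferred spot
is taken always backs up one spot first. -/
def naplesParks (n : ℕ) (α : Fin n → ℕ) : Bool :=
  parksNaples n 1 α (fun _ => true)

/-- The expected number of random `k`-Naples parking functions on `n` cars. -/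
noncomputable def T (k : ℕ) (p : ℝ) (n : ℕ) : ℝ :=
  ∑ α : Fin n → Fin n, probNaples n k p (fun i => (α i).1 + 1)

/-- The staircase preference list: `m t` copies of `t`, then `m (t-1)` copies of `t-1`,
…, down to `m 2` copies of `2`. -/
def stair (t : ℕ) (m : ℕ → ℕ) : List ℕ :=
  ((List.range' 2 (t - 1)).reverse).flatMap (fun j => List.replicate (m j) j)

/-- The staircase condition on a preference tuple: `α₁ = α₂`, each entry decreases by
`0` or `1`, and `αₙ = 2`. -/
def Staircase {n : ℕ} (hn : 2 ≤ n) (α : Fin n → ℕ) : Prop :=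
  α ⟨0, by omega⟩ = α ⟨1, by omega⟩ ∧
  (∀ i : ℕ, (h : i + 1 < n) →
    α ⟨i + 1, h⟩ = α ⟨i, by omega⟩ ∨ α ⟨i + 1, h⟩ + 1 = α ⟨i, by omega⟩) ∧
  α ⟨n - 1, by omega⟩ = 2

/-- The number of 1-Naples parking functions on `n` cars. -/
def Nnum (n : ℕ) : ℕ :=
  (Finset.univ.filter
    (fun α : Fin n → Fin n => naplesParks n (fun i => (α i).1 + 1) = true)).card

/-! After the first car parks at `α₁ = α₂`, the occupied spots always form an interval `[L, R]`
and the next preference `a` lies in `{L - 1, L, L + 1}`. A car preferring `L - 1` parks there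
whatever its coin; one preferring `L` goes to `L - 1` or to `R + 1` according to its coin; one
preferring `L + 1` backs up onto the taken spot `L`, so both coins send it to `R + 1`. Following
this recursion, the number of successful coin sequences is `1 + 2c`, where `c` is the binary
number whose digits mark the plateaus `αᵢ = αᵢ₊₁` of the staircase. A staircase ending at `2` is
determined by the positions of its plateaus, hence by `c`, hence by `g α`. -/

open Finset

def parkCount (step : Finset ℕ → ℕ → Bool → Option ℕ) : List ℕ → Finset ℕ → ℕ
  | [], _ => 1
  | a :: as, occ => ∑ b : Bool, (step occ a b).elim 0 fun s => parkCount step as (insert s occ)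

theorem card_filter_runPark_eq_parkCount (step : Finset ℕ → ℕ → Bool → Option ℕ) {m : ℕ}
    (a : Fin m → ℕ) (occ : Finset ℕ) :
    #{β : Fin m → Bool | runPark step (List.ofFn fun i => (a i, β i)) occ} =
      parkCount step (List.ofFn a) occ := by
  induction m generalizing occ with
  | zero => simp [runPark, parkCount]
  | succ m ih =>
    rw [card_filter, ← (Fin.consEquiv fun _ => Bool).sum_comp, Fintype.sum_prod_type,
      List.ofFn_succ, parkCount]
    refine Fintype.sum_congr _ _ fun b => ?_
    rcases h : step occ (a 0) b with _ | s
    · simp [Fin.consEquiv, runPark, h]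
    · simp only [Option.elim, ← ih, card_filter]
      simp [Fin.consEquiv, runPark, h]

theorem parksUnder_succ {m : ℕ} (α : Fin (m + 1) → ℕ) (β : Fin m → Bool) :
    parksUnder (m + 1) α β =
      runPark (naplesStep (m + 1) 1) (List.ofFn fun i => (α i.succ, !β i)) {α 0} := by
  simp [parksUnder, parksNaples, List.ofFn_succ, runPark, naplesStep]

theorem g_succ_eq_parkCount {m : ℕ} (α : Fin (m + 1) → ℕ) :
    g (m + 1) α = parkCount (naplesStep (m + 1) 1) (List.ofFn fun i => α i.succ) {α 0} := by
  rw [← card_filter_runPark_eq_parkCount, g]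
  simp_rw [parksUnder_succ]
  exact card_equiv (Equiv.arrowCongr (.refl _) Equiv.boolNot) (by simp)

theorem naplesStep_of_notMem {n k a : ℕ} {occ : Finset ℕ} (b : Bool) (h : a ∉ occ) :
    naplesStep n k occ a b = some a := by
  simp [naplesStep, h]

theorem firstFree_Icc_range' {L R n a : ℕ} (hL : L ≤ a + 1) (ha : a ≤ R) (hR : R ≤ n) :
    firstFree (Icc L R) (List.range' (a + 1) (n - a)) =
      if R < n then some (R + 1) else none := by
  obtain ⟨d, rfl⟩ := Nat.exists_eq_add_of_le hR
  have hsplit : List.range' (a + 1) (R + d - a) =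
      List.range' (a + 1) (R - a) ++ List.range' (R + 1) d := by
    rw [show R + 1 = a + 1 + (R - a) by omega, List.range'_append_1]; congr 1; omega
  have hin : ∀ x ∈ List.range' (a + 1) (R - a), x ∈ Icc L R := by
    intro x hx; rw [List.mem_range'_1] at hx; simp only [mem_Icc]; omega
  rw [firstFree, hsplit, List.find?_append, List.find?_eq_none.mpr (by simpa using hin)]
  cases d with
  | zero => simp
  | succ d => simp [List.range'_succ]

theorem naplesStep_Icc_false {L R n k a : ℕ} (hL : L ≤ a) (ha : a ≤ R) (hR : R ≤ n) :
    naplesStep n k (Icc L R) a false = if R < n then some (R + 1) else none := by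
  rw [naplesStep, if_neg (not_not.2 (mem_Icc.2 ⟨hL, ha⟩))]
  exact firstFree_Icc_range' (by omega) ha hR

theorem naplesStep_one_Icc_true_of_lt {L R n a : ℕ} (hL : L < a) (ha : a ≤ R) (hR : R ≤ n) :
    naplesStep n 1 (Icc L R) a true = if R < n then some (R + 1) else none := by
  rw [← naplesStep_Icc_false hL.le ha hR]
  rcases Nat.lt_or_ge a 2 with h1 | h2
  · simp [naplesStep, show a - 1 = 0 by omega, firstFree]
  · rw [naplesStep, naplesStep, show min 1 (a - 1) = 1 by omega,
      show max (a - 1) 1 = a - 1 by omega]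
    simp [firstFree, show ¬ a - 1 < L by omega, show ¬ R < a - 1 by omega]

theorem naplesStep_one_Icc_left_true {L R n : ℕ} (hL : 2 ≤ L) (hLR : L ≤ R) :
    naplesStep n 1 (Icc L R) L true = some (L - 1) := by
  rw [naplesStep, show min 1 (L - 1) = 1 by omega, show max (L - 1) 1 = L - 1 by omega]
  simp [firstFree, show ¬ R < L by omega, show 0 < L by omega]

/-- The empty staircase sits at height `1`, so the final `2` of a staircase counts as a descent
and `plateauCode` may read the entry after the last one as `1`. -/
inductive IsStair : ℕ → List ℕ → Prop
  | nil : IsStair 1 []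
  | cons {a h : ℕ} {l : List ℕ} :
      2 ≤ a → h = a ∨ h + 1 = a → IsStair h l → IsStair a (a :: l)

def plateauCode : List ℕ → ℕ
  | [] => 0
  | a :: l => (if a = l.headD 1 then 1 else 0) + 2 * plateauCode l

namespace IsStair

variable {h : ℕ} {l : List ℕ}

theorem headD_eq (hs : IsStair h l) : l.headD 1 = h := by
  cases hs <;> rfl

theorem two_le (hs : IsStair h l) (hl : l ≠ []) : 2 ≤ h := by
  cases hs with
  | nil => contradiction
  | cons h2 _ _ => exact h2

theorem le_length_add_one (hs : IsStair h l) : h ≤ l.length + 1 := by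
  induction hs with
  | nil => rfl
  | cons _ hah _ ih => simp only [List.length_cons]; omega

theorem plateauCode_eq_zero (hs : IsStair h l) (hh : h = l.length + 1) : plateauCode l = 0 := by
  induction hs with
  | nil => rfl
  | @cons a b l _ _ hs ih =>
    have := hs.le_length_add_one
    simp only [List.length_cons] at hh
    rw [plateauCode, hs.headD_eq, if_neg (by omega), ih (by omega)]

theorem eq_of_plateauCode_eq {h' : ℕ} {l' : List ℕ} (hs : IsStair h l) (hs' : IsStair h' l')
    (hlen : l.length = l'.length) (hcode : plateauCode l = plateauCode l') : l = l' := by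
  induction hs generalizing h' l' with
  | nil => exact (List.length_eq_zero_iff.mp hlen.symm).symm
  | @cons a b l _ hab hs ih =>
    cases hs' with
    | nil => simp at hlen
    | @cons _ b' l' _ hab' hs' =>
      simp only [plateauCode, hs.headD_eq, hs'.headD_eq] at hcode
      have hbit : a = b ↔ h' = b' := by split_ifs at hcode <;> omega
      have htail := ih hs' (by simpa using hlen) (by split_ifs at hcode <;> omega)
      have hb : b = b' := by rw [← hs.headD_eq, ← hs'.headD_eq, htail]
      rw [htail, show a = h' by omega]

theorem parkCount_Icc_add (hs : IsStair h l) {L R n : ℕ} (hL : 1 ≤ L) (hLR : L ≤ R)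
    (hR : R ≤ n) (hhL : L ≤ h + 1) (hLh : h ≤ L + 1) (hhR : h ≤ R)
    (hlen : l.length + (R - L + 1) = n) :
    parkCount (naplesStep n 1) l (Icc L R) + L = h + 1 + 2 * plateauCode l := by
  induction hs generalizing L R with
  | nil => simp only [List.length_nil] at hlen; rw [parkCount, plateauCode]; omega
  | @cons a b l ha2 hab hs ih =>
    have hbit : (if a = b then 1 else 0) + a = b + 1 := by split_ifs <;> omega
    have hle := hs.le_length_add_one
    simp only [List.length_cons] at hlen
    simp only [parkCount, Fintype.sum_bool, plateauCode, hs.headD_eq]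
    rcases (by omega : a + 1 = L ∨ a = L ∨ a = L + 1) with rfl | rfl | rfl
    · rw [naplesStep_of_notMem _ (by simp), naplesStep_of_notMem _ (by simp)]
      simp only [Option.elim_some]
      rw [insert_Icc_add_one_left_eq_Icc hhR]
      have := ih (L := a) (R := R) (by omega) (by omega) hR (by omega) (by omega) (by omega)
        (by omega)
      omega
    · rw [naplesStep_one_Icc_left_true ha2 hLR, naplesStep_Icc_false le_rfl hLR hR,
        Option.elim_some, insert_Icc_left_eq_Icc_sub_one (by omega)]
      have hback := ih (L := a - 1) (R := R) (by omega) (by omega) hR (by omega) (by omega)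
        (by omega) (by omega)
      rcases hR.lt_or_eq with hR | rfl
      · rw [if_pos hR, Option.elim_some, insert_Icc_right_eq_Icc_add_one (by omega)]
        have hfwd := ih (L := a) (R := R + 1) hL (by omega) hR (by omega) (by omega) (by omega)
          (by omega)
        omega
      · -- no room above `R`: the remaining cars must fill `1, …, L - 1`, a strict descent
        have := (IsStair.cons ha2 hab hs).plateauCode_eq_zero
          (by simp only [List.length_cons]; omega)
        simp only [plateauCode, hs.headD_eq] at this
        simp only [lt_irrefl, if_false, Option.elim_none]
        omega
    · have hR : R < n := by omega
      rw [naplesStep_one_Icc_true_of_lt (by omega) hhR hR.le,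
        naplesStep_Icc_false (by omega) hhR hR.le, if_pos hR, Option.elim_some,
        insert_Icc_right_eq_Icc_add_one (by omega)]
      have := ih (L := L) (R := R + 1) hL (by omega) hR (by omega) (by omega) (by omega)
        (by omega)
      omega

end IsStair

theorem isStair_ofFn {m : ℕ} (f : Fin (m + 1) → ℕ)
    (hstep : ∀ i : Fin m, f i.succ = f i.castSucc ∨ f i.succ + 1 = f i.castSucc)
    (hlast : f (Fin.last m) = 2) : IsStair (f 0) (List.ofFn f) := by
  induction m with
  | zero => exact .cons hlast.ge (.inr hlast.symm) .nil
  | succ m ih =>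
    have htail := ih (fun i => f i.succ) (fun i => hstep i.succ) hlast
    rw [List.ofFn_succ]
    have h2 : 2 ≤ f (Fin.succ 0) := htail.two_le (by simp)
    have h0 : f (Fin.succ 0) = f 0 ∨ f (Fin.succ 0) + 1 = f 0 := hstep 0
    exact .cons (by omega) h0 htail

theorem isStair_of_staircase {k : ℕ} {hn : 2 ≤ k + 2} {α : Fin (k + 2) → ℕ}
    (hA : Staircase hn α) : IsStair (α 0) (List.ofFn fun i : Fin (k + 1) => α i.succ) := by
  convert isStair_ofFn (fun i : Fin (k + 1) => α i.succ) (fun i => hA.2.1 (i + 1) _)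
    hA.2.2 using 1
  exact hA.1

theorem g_eq_of_staircase {k : ℕ} {hn : 2 ≤ k + 2} {α : Fin (k + 2) → ℕ}
    (hA : Staircase hn α) :
    g (k + 2) α = 1 + 2 * plateauCode (List.ofFn fun i : Fin (k + 1) => α i.succ) := by
  have hs := isStair_of_staircase hA
  have h2 := hs.two_le (by simp)
  have hn := hs.le_length_add_one
  simp only [List.length_ofFn] at hn
  have := hs.parkCount_Icc_add (L := α 0) (R := α 0) (n := k + 1 + 1) (by omega) le_rfl
    (by omega) (by omega) (by omega) le_rfl (by simp)
  rw [g_succ_eq_parkCount, ← Icc_self]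
  omega

theorem stmt12_general (n : ℕ) (hn : 2 ≤ n) (α α' : Fin n → ℕ)
    (hA : Staircase hn α) (hA' : Staircase hn α')
    (hg : g n α = g n α') : α = α' := by
  obtain ⟨k, rfl⟩ : ∃ k, n = k + 2 := ⟨n - 2, by omega⟩
  rw [g_eq_of_staircase hA, g_eq_of_staircase hA'] at hg
  have htail : (fun i : Fin (k + 1) => α i.succ) = fun i => α' i.succ :=
    List.ofFn_injective <| (isStair_of_staircase hA).eq_of_plateauCode_eq
      (isStair_of_staircase hA') (by simp) (by omega)
  funext i
  refine Fin.cases ?_ (congrFun htail) i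
  exact hA.1.trans ((congrFun htail 0).trans hA'.1.symm)

/-- `g` is injective on staircase tuples. -/
theorem stmt12 (n : ℕ) (hn : 2 ≤ n) (α α' : Fin n → ℕ)
    (hr : ∀ i, 1 ≤ α i ∧ α i ≤ n) (hr' : ∀ i, 1 ≤ α' i ∧ α' i ≤ n)
    (hA : Staircase hn α) (hA' : Staircase hn α')
    (hg : g n α = g n α') : α = α' :=
  stmt12_general n hn α α' hA hA' hg
end

section
/- In the deterministic 1-Naples simulation, if α ∈ {1,...,n}^n parks under the all-ones choice sequence β = (1,...,1) (i.e., α is a parking function), then α parks under every choice sequence β ∈ {0,1}^{n−1}. -/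
/-! Run the forward-only process (all coins `false`) and an arbitrary `k`-Naples process side
by side, car by car, keeping the invariant that for every `m` the Naples configuration has at
most as many occupied spots in `[m, n]` as the forward one. When the forward process parks a car
with preference `a` at a free spot `s ∈ [a, n]`, the forward configuration, hence also the Naples
one, has a free spot in `[a, n]`, so the Naples car parks at some `s'`. Either `s' < a`, or
`[a, s')` was full in the Naples configuration; then for `s < m ≤ s'` the gap at `s` in the
forward configuration makes the invariant strict on `[m, n]`, which absorbs the new car. -/

open Finset

lemma card_inter_lt_card_of_notMem {α : Type*} [DecidableEq α] {t u : Finset α} {x : α}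
    (hxu : x ∈ u) (hxt : x ∉ t) : #(t ∩ u) < #u :=
  card_lt_card ((ssubset_iff_of_subset inter_subset_right).2
    ⟨x, hxu, fun hx => hxt (mem_inter.1 hx).1⟩)

lemma card_insert_inter_of_notMem {α : Type*} [DecidableEq α] {t : Finset α} {x : α}
    (hx : x ∉ t) (u : Finset α) : #(insert x t ∩ u) = #(t ∩ u) + if x ∈ u then 1 else 0 := by
  split_ifs with hxu
  · rw [insert_inter_of_mem hxu, card_insert_of_notMem fun h => hx (mem_inter.1 h).1]
  · rw [insert_inter_of_notMem hxu, add_zero]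

lemma card_inter_Icc_eq_add {a m n : ℕ} (t : Finset ℕ) (ham : a ≤ m) (hmn : m ≤ n + 1) :
    #(t ∩ Icc a n) = #(t ∩ Ico a m) + #(t ∩ Icc m n) := by
  rw [← card_union_of_disjoint, ← inter_union_distrib_left]
  · congr 2
    ext x
    simp only [mem_union, mem_Ico, mem_Icc]
    omega
  · exact disjoint_left.2 fun x hx hx' => by
      simp only [mem_inter, mem_Ico, mem_Icc] at hx hx'
      omega

def TailDominated (n : ℕ) (occ' occ : Finset ℕ) : Prop :=
  ∀ m, #(occ' ∩ Icc m n) ≤ #(occ ∩ Icc m n)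

namespace TailDominated

variable {n a s : ℕ} {occ occ' : Finset ℕ}

lemma exists_free (h : TailDominated n occ' occ) (has : a ≤ s) (hsn : s ≤ n) (hs : s ∉ occ) :
    ∃ x ∈ Icc a n, x ∉ occ' := by
  obtain ⟨x, hx, hxo⟩ := exists_mem_notMem_of_card_lt_card
    ((h a).trans_lt (card_inter_lt_card_of_notMem (mem_Icc.2 ⟨has, hsn⟩) hs))
  exact ⟨x, hx, fun h => hxo (mem_inter.2 ⟨h, hx⟩)⟩

lemma card_lt_of_gap {m : ℕ} (h : TailDominated n occ' occ) (has : a ≤ s) (hsm : s < m)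
    (hmn : m ≤ n) (hs : s ∉ occ) (hfull : Ico a m ⊆ occ') :
    #(occ' ∩ Icc m n) < #(occ ∩ Icc m n) := by
  have hsplit' := card_inter_Icc_eq_add occ' (has.trans hsm.le) (by omega : m ≤ n + 1)
  have hsplit := card_inter_Icc_eq_add occ (has.trans hsm.le) (by omega : m ≤ n + 1)
  have hgap := card_inter_lt_card_of_notMem (mem_Ico.2 ⟨has, hsm⟩) hs
  rw [inter_eq_right.2 hfull] at hsplit'
  have := h a
  omega

lemma insert {s' : ℕ} (h : TailDominated n occ' occ) (has : a ≤ s) (hsn : s ≤ n) (hs : s ∉ occ)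
    (hs' : s' ∉ occ') (hs'a : s' < a ∨ Ico a s' ⊆ occ') :
    TailDominated n (insert s' occ') (insert s occ) := by
  intro m
  rw [card_insert_inter_of_notMem hs', card_insert_inter_of_notMem hs]
  have hm := h m
  by_cases hs'm : s' ∈ Icc m n <;> by_cases hsm : s ∈ Icc m n <;>
    simp only [hs'm, hsm, if_true, if_false] <;> try omega
  rw [mem_Icc] at hs'm hsm
  have hfull : Ico a m ⊆ occ' :=
    (Ico_subset_Ico_right hs'm.1).trans (hs'a.resolve_left (by omega))
  have := h.card_lt_of_gap has (by omega) (hs'm.1.trans hs'm.2) hs hfull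
  omega

end TailDominated

lemma firstFree_eq_some {occ : Finset ℕ} {l : List ℕ} {s : ℕ} (h : firstFree occ l = some s) :
    s ∈ l ∧ s ∉ occ :=
  ⟨List.mem_of_find?_eq_some h, by simpa using List.find?_some h⟩

section naplesStep

variable {n k a : ℕ} {occ : Finset ℕ}

lemma naplesStep_false_eq_some {s : ℕ} (han : a ≤ n) (h : naplesStep n k occ a false = some s) :
    a ≤ s ∧ s ≤ n ∧ s ∉ occ := by
  simp only [naplesStep, Bool.false_eq_true, if_false] at h
  by_cases ha : a ∈ occ
  · rw [if_neg (not_not.2 ha)] at h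
    obtain ⟨hmem, hs⟩ := firstFree_eq_some h
    rw [List.mem_range'_1] at hmem
    exact ⟨by omega, by omega, hs⟩
  · rw [if_pos ha, Option.some_inj] at h
    exact h ▸ ⟨le_rfl, han, ha⟩

lemma firstFree_range'_eq_some {x : ℕ} (hx : x ∈ Icc a n) (hxo : x ∉ occ) (ha : a ∈ occ) :
    ∃ t, firstFree occ (List.range' (a + 1) (n - a)) = some t ∧ t ∉ occ ∧ Ico a t ⊆ occ := by
  have hxa : x ≠ a := by rintro rfl; exact hxo ha
  rw [mem_Icc] at hx
  have hsome : (firstFree occ (List.range' (a + 1) (n - a))).isSome :=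
    List.find?_isSome.2 ⟨x, List.mem_range'_1.2 (by omega), decide_eq_true hxo⟩
  obtain ⟨t, ht⟩ := Option.isSome_iff_exists.1 hsome
  refine ⟨t, ht, by simpa using List.find?_some ht, fun y hy => ?_⟩
  rw [firstFree, List.find?_range'_eq_some] at ht
  rw [mem_Ico] at hy
  rcases hy.1.eq_or_lt with rfl | hay
  · exact ha
  · simpa using ht.2.2 y hay hy.2

lemma naplesStep_eq_some_of_free (back : Bool) {x : ℕ} (hx : x ∈ Icc a n) (hxo : x ∉ occ) :
    ∃ s, naplesStep n k occ a back = some s ∧ s ∉ occ ∧ (s < a ∨ Ico a s ⊆ occ) := by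
  unfold naplesStep
  by_cases ha : a ∈ occ
  · obtain ⟨t, ht, hto, hfull⟩ := firstFree_range'_eq_some hx hxo ha
    rw [if_neg (not_not.2 ha)]
    cases back
    · exact ⟨t, ht, hto, Or.inr hfull⟩
    · simp only [↓reduceIte]
      split
      · rename_i s hs
        obtain ⟨hmem, hso⟩ := firstFree_eq_some hs
        rw [List.mem_reverse, List.mem_range'_1] at hmem
        exact ⟨s, rfl, hso, Or.inl (by omega)⟩
      · exact ⟨t, ht, hto, Or.inr hfull⟩
  · exact ⟨a, if_pos ha, ha, Or.inr (by simp)⟩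

end naplesStep

theorem runPark_of_runPark_forward {n k : ℕ} :
    ∀ (l : List (ℕ × Bool)), (∀ p ∈ l, p.1 ≤ n) → ∀ {occ occ' : Finset ℕ},
      TailDominated n occ' occ →
      runPark (naplesStep n k) (l.map fun p => (p.1, false)) occ = true →
      runPark (naplesStep n k) l occ' = true
  | [], _, _, _, _, _ => rfl
  | (a, b) :: l, hl, occ, occ', hdom, h => by
    simp only [List.map_cons, runPark] at h ⊢
    cases hs : naplesStep n k occ a false with
    | none => simp [hs] at h
    | some s =>
      rw [hs] at h
      obtain ⟨has, hsn, hso⟩ := naplesStep_false_eq_some (hl _ List.mem_cons_self) hs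
      obtain ⟨x, hx, hxo⟩ := hdom.exists_free has hsn hso
      obtain ⟨s', hs', hs'o, hs'a⟩ := naplesStep_eq_some_of_free b hx hxo
      rw [hs']
      exact runPark_of_runPark_forward l (fun p hp => hl p (List.mem_cons_of_mem _ hp))
        (hdom.insert has hsn hso hs'o hs'a) h

theorem parksNaples_of_forward {n k : ℕ} {α : Fin n → ℕ} (hα : ∀ i, α i ≤ n)
    (h : parksNaples n k α (fun _ => false) = true) (b : Fin n → Bool) :
    parksNaples n k α b = true := by
  unfold parksNaples at h ⊢
  refine runPark_of_runPark_forward _ ?_ (fun _ => le_rfl) ?_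
  · simpa [List.mem_ofFn] using hα
  · simpa [List.map_ofFn, Function.comp_def] using h

/-- If `α` parks under the all-ones choice sequence (i.e. `α` is a parking function),
then `α` parks under every choice sequence. -/
theorem stmt18 (n : ℕ) (α : Fin n → Fin n)
    (h : parksUnder n (fun i => (α i).1 + 1) (fun _ => true) = true) :
    ∀ β : Fin (n - 1) → Bool, parksUnder n (fun i => (α i).1 + 1) β = true := by
  intro β
  refine parksNaples_of_forward (fun i => (α i).2) ?_ _
  simpa [parksUnder] using h
end
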